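/- For n ≥ 0, |Oct_n| = 1 + 4(w_n − 2) + 4(w_n − 2)² − 2(w_{n+2} − w_{n+1})(w_{n+2} − w_{n+1} − 1). -/

import Mathlib

/-- The sequence `w_{2k} = 3·2^k`, `w_{2k+1} = 4·2^k`. -/
def w (n : ℕ) : ℤ := if n % 2 = 0 then 3 * 2 ^ (n / 2) else 4 * 2 ^ (n / 2)

/-- `E a b` : lattice points with `|x| ≤ a`, `|y| ≤ a`, `|x|+|y| ≤ b`. -/
noncomputable def E (a b : ℤ) : Finset (ℤ × ℤ) :=
  (Finset.Icc (-a) a ×ˢ Finset.Icc (-a) a).filter fun p => |p.1| + |p.2| ≤ b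

noncomputable def Oct (n : ℕ) : Finset (ℤ × ℤ) := E (w n - 2) (w (n + 1) - 3)

noncomputable def S (n : ℕ) : Finset (ℤ × ℤ) := (Oct n).filter fun p => ¬ (2 ∣ p.1 ∧ 2 ∣ p.2)

/-!
`E a b` is the square `[-a, a]²` with its four corners cut off. Counting by columns, column `x`
loses `2 · max 0 (|x| - (b - a))` points of the square, and with `d = 2a - b` these losses add up
to `2 d (d + 1)`. For `Oct n` we have `a = w n - 2` and `2a - b = w (n + 2) - w (n + 1) - 1`,
since `w (n + 2) = 2 · w n`.
-/

open Finset

lemma filter_abs_le_Icc (a r : ℤ) :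
    (Icc (-a) a).filter (fun y => |y| ≤ r) = Icc (-min a r) (min a r) := by
  ext y
  rw [mem_filter, mem_Icc, mem_Icc, ← abs_le, ← abs_le, le_min_iff]

lemma sum_Icc_max_abs_sub (c : ℤ) (hc : 0 ≤ c) (d : ℕ) :
    ∑ x ∈ Icc (-(c + d)) (c + d), max 0 (|x| - c) = d * (d + 1) := by
  induction d with
  | zero =>
    refine (sum_eq_zero fun x hx => ?_).trans (by simp)
    rw [mem_Icc, ← abs_le] at hx
    simpa using hx
  | succ d ih =>
    have hIcc : Icc (-(c + (d + 1 : ℕ))) (c + (d + 1 : ℕ)) =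
        insert (-(c + d + 1)) (insert (c + d + 1) (Icc (-(c + d)) (c + d))) := by
      ext x; simp only [mem_insert, mem_Icc]; push_cast; omega
    rw [hIcc, sum_insert (by simp only [mem_insert, mem_Icc]; omega),
      sum_insert (by simp only [mem_Icc]; omega), ih]
    rw [abs_of_neg (by omega), abs_of_pos (by omega)]
    push_cast
    rw [max_eq_right (by omega), max_eq_right (by omega)]
    ring

lemma card_E_eq_sum (a b : ℤ) (hab : a ≤ b) :
    ((E a b).card : ℤ) = ∑ x ∈ Icc (-a) a, (2 * a + 1 - 2 * max 0 (|x| - (b - a))) := by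
  rw [E, card_filter, sum_product, Nat.cast_sum]
  refine sum_congr rfl fun x hx => ?_
  rw [mem_Icc, ← abs_le] at hx
  have hfib : ∑ y ∈ Icc (-a) a, (if |x| + |y| ≤ b then 1 else 0) =
      ((Icc (-a) a).filter (fun y => |y| ≤ b - |x|)).card := by
    rw [card_filter]
    exact sum_congr rfl fun y _ => by simp only [le_sub_iff_add_le']
  have hx₀ := abs_nonneg x
  rw [hfib, filter_abs_le_Icc, Int.card_Icc, Int.toNat_of_nonneg (by omega), min_def, max_def]
  split_ifs <;> omega

lemma card_E (a b : ℤ) (hab : a ≤ b) (hb : b ≤ 2 * a) :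
    ((E a b).card : ℤ) = (2 * a + 1) ^ 2 - 2 * (2 * a - b) * (2 * a - b + 1) := by
  obtain ⟨d, hd⟩ : ∃ d : ℕ, (d : ℤ) = 2 * a - b := ⟨(2 * a - b).toNat, by omega⟩
  have hcorners := sum_Icc_max_abs_sub (b - a) (by omega) d
  rw [show b - a + d = a by omega] at hcorners
  rw [card_E_eq_sum a b hab, sum_sub_distrib, ← mul_sum, hcorners, sum_const, Int.card_Icc,
    nsmul_eq_mul, Int.toNat_of_nonneg (by omega), ← hd]
  ring

lemma w_add_two (n : ℕ) : w (n + 2) = 2 * w n := by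
  have hmod : (n + 2) % 2 = n % 2 := by omega
  have hdiv : (n + 2) / 2 = n / 2 + 1 := by omega
  simp only [w, hmod, hdiv]
  split_ifs <;> ring

lemma w_lt_succ (n : ℕ) : w n < w (n + 1) := by
  have hpos : (0 : ℤ) < 2 ^ (n / 2) := by positivity
  rcases Nat.even_or_odd' n with ⟨k, rfl | rfl⟩
  · rw [w, w, if_pos (by omega), if_neg (by omega), show (2 * k + 1) / 2 = 2 * k / 2 by omega]
    omega
  · rw [w, w, if_neg (by omega), if_pos (by omega),
      show (2 * k + 1 + 1) / 2 = (2 * k + 1) / 2 + 1 by omega, pow_succ]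
    omega

theorem stmt_3 (n : ℕ) :
    ((Oct n).card : ℤ) = 1 + 4 * (w n - 2) + 4 * (w n - 2) ^ 2
      - 2 * (w (n + 2) - w (n + 1)) * (w (n + 2) - w (n + 1) - 1) := by
  have h₀ := w_lt_succ n
  have h₁ := w_lt_succ (n + 1)
  rw [w_add_two] at h₁ ⊢
  rw [Oct, card_E _ _ (by omega) (by omega)]
  ring
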